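/- arXiv:2205.08761 — 6 statements merged into one kernel-verified Lean document; each statement's English description precedes it below -/
import Mathlib

section
/- For every real a with 0 ≤ a ≤ 1 and every real r ≥ 0, one has a·|log a| ≤ exp(−r²) + 2·a·r², where a·|log a| is interpreted as 0 when a = 0. -/
/-!
The concave function `a ↦ -a log a` lies below the affine functions `a ↦ a s + exp (-1 - s)`
(Young's inequality for the entropy; after dividing by `a` it is `x + 1 ≤ exp x` at
`x = -1 - s - log a`).
Taking `s = 2 r²` gives the bound, since `exp (-1 - 2 r²) ≤ exp (-r²)`.
-/

open Real

namespace Real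

lemma negMulLog_le_mul_add_exp {a : ℝ} (ha : 0 ≤ a) (s : ℝ) :
    negMulLog a ≤ a * s + exp (-1 - s) := by
  rcases ha.eq_or_lt with rfl | ha
  · simpa using (exp_pos _).le
  have key : -log a - s ≤ exp (-1 - s) / a := by
    have := add_one_le_exp (-1 - s - log a)
    rw [sub_eq_add_neg _ (log a), exp_add, exp_neg, exp_log ha, ← div_eq_mul_inv] at this
    linarith
  rw [le_div_iff₀ ha] at key
  rw [negMulLog]
  linarith

lemma mul_abs_log_eq_negMulLog {a : ℝ} (ha0 : 0 ≤ a) (ha1 : a ≤ 1) :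
    a * |log a| = negMulLog a := by
  rw [abs_of_nonpos (log_nonpos ha0 ha1), negMulLog]
  ring

end Real

theorem small_entropy_bound_general (a r : ℝ) (ha0 : 0 ≤ a) (ha1 : a ≤ 1) :
    a * |Real.log a| ≤ Real.exp (-r ^ 2) + 2 * a * r ^ 2 := by
  have hexp : exp (-1 - 2 * r ^ 2) ≤ exp (-r ^ 2) := exp_le_exp.mpr (by linarith [sq_nonneg r])
  calc a * |log a| = negMulLog a := mul_abs_log_eq_negMulLog ha0 ha1
    _ ≤ a * (2 * r ^ 2) + exp (-1 - 2 * r ^ 2) := negMulLog_le_mul_add_exp ha0 _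
    _ ≤ exp (-r ^ 2) + 2 * a * r ^ 2 := by linarith

/-- For `0 ≤ a ≤ 1` and `r ≥ 0`, `a |log a| ≤ e^{-r²} + 2 a r²`
(with the convention `0 · log 0 = 0`, automatic since `Real.log 0 = 0`). -/
theorem small_entropy_bound (a r : ℝ) (ha0 : 0 ≤ a) (ha1 : a ≤ 1) (hr : 0 ≤ r) :
    a * |Real.log a| ≤ Real.exp (-r ^ 2) + 2 * a * r ^ 2 :=
  small_entropy_bound_general a r ha0 ha1
end

section
/- Let M0 > 8π, m0 > 0 and I0 ≥ 0, and define m(t) := M0/(1 + ((M0 - m0)/m0)·exp(-M0·t)) and m₂(t) := m(t)·( 4t − (1/(2π))·log( (m0·exp(M0·t) + M0 − m0)/M0 ) + I0/m0 ) for t ≥ 0. Then there exists T > 0 such that m₂(T) < 0. -/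
/-!
For `t ≥ 0` the argument of the logarithm is at least `min m0 M0 · e^{M0 t} / M0`, so the
bracket multiplying `m(t)` is at most a constant plus `(4 - M0/(2π)) t`. The slope is negative
exactly when `M0 > 8π`, so the bracket tends to `-∞`, while the logistic mass `m(t)` stays positive.
-/

open Real Filter

lemma min_mul_le_mul_add_sub {a b E : ℝ} (hE : 1 ≤ E) : min a b * E ≤ a * E + b - a := by
  rcases le_total a b with hab | hba
  · rw [min_eq_left hab]; linarith
  · rw [min_eq_right hba]; nlinarith [mul_nonneg (sub_nonneg.2 hba) (sub_nonneg.2 hE)]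

section Logistic

variable {M0 m0 t : ℝ}

lemma min_mul_exp_le_logistic_denom (hM0 : 0 ≤ M0) (ht : 0 ≤ t) :
    min m0 M0 * exp (M0 * t) ≤ m0 * exp (M0 * t) + M0 - m0 :=
  min_mul_le_mul_add_sub (one_le_exp (mul_nonneg hM0 ht))

lemma logistic_denom_pos (hm0 : 0 < m0) (hM0 : 0 < M0) (ht : 0 ≤ t) :
    0 < m0 * exp (M0 * t) + M0 - m0 :=
  (mul_pos (lt_min hm0 hM0) (exp_pos _)).trans_le (min_mul_exp_le_logistic_denom hM0.le ht)

lemma one_add_div_mul_exp_neg (hm0 : m0 ≠ 0) :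
    1 + (M0 - m0) / m0 * exp (-M0 * t) =
      exp (-M0 * t) * (m0 * exp (M0 * t) + M0 - m0) / m0 := by
  have hexp : exp (-M0 * t) * exp (M0 * t) = 1 := by rw [← exp_add]; ring_nf; exact exp_zero
  have hcancel : (M0 - m0) / m0 * m0 = M0 - m0 := div_mul_cancel₀ _ hm0
  rw [eq_div_iff hm0]
  linear_combination (-m0) * hexp + exp (-M0 * t) * hcancel

lemma logistic_pos (hm0 : 0 < m0) (hM0 : 0 < M0) (ht : 0 ≤ t) :
    0 < M0 / (1 + (M0 - m0) / m0 * exp (-M0 * t)) := by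
  rw [one_add_div_mul_exp_neg hm0.ne']
  have := logistic_denom_pos hm0 hM0 ht
  positivity

lemma add_log_min_div_le_log_logistic_denom (hm0 : 0 < m0) (hM0 : 0 < M0) (ht : 0 ≤ t) :
    M0 * t + log (min m0 M0 / M0) ≤ log ((m0 * exp (M0 * t) + M0 - m0) / M0) := by
  have hc : 0 < min m0 M0 / M0 := div_pos (lt_min hm0 hM0) hM0
  calc M0 * t + log (min m0 M0 / M0) = log (exp (M0 * t) * (min m0 M0 / M0)) := by
        rw [log_mul (exp_pos _).ne' hc.ne', log_exp]
    _ ≤ log ((m0 * exp (M0 * t) + M0 - m0) / M0) := by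
        refine log_le_log (by positivity) ?_
        rw [mul_div_assoc', mul_comm]
        exact div_le_div_of_nonneg_right (min_mul_exp_le_logistic_denom hM0.le ht) hM0.le

lemma tendsto_second_moment_factor_atBot (I0 : ℝ) (hM0 : 8 * π < M0) (hm0 : 0 < m0) :
    Tendsto (fun t => 4 * t - (1 / (2 * π)) * log ((m0 * exp (M0 * t) + M0 - m0) / M0) + I0 / m0)
      atTop atBot := by
  have hM0pos : 0 < M0 := by linarith [pi_pos]
  have hslope : 4 - M0 / (2 * π) < 0 := by
    rw [sub_neg, lt_div_iff₀ (by positivity)]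
    linarith
  set C := I0 / m0 - log (min m0 M0 / M0) / (2 * π)
  have haffine : Tendsto (fun t => C + (4 - M0 / (2 * π)) * t) atTop atBot :=
    tendsto_atBot_add_const_left _ C (tendsto_id.const_mul_atTop_of_neg hslope)
  refine tendsto_atBot_mono' _ ?_ haffine
  filter_upwards [eventually_ge_atTop 0] with t ht
  have hlog := mul_le_mul_of_nonneg_left (add_log_min_div_le_log_logistic_denom hm0 hM0pos ht)
    (one_div_nonneg.2 (by positivity : (0 : ℝ) ≤ 2 * π))
  simp only [C]
  linear_combination hlog

end Logistic

theorem second_moment_negative_supercritical_general (M0 m0 I0 : ℝ)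
    (hM0 : 8 * π < M0) (hm0 : 0 < m0)
    (m m2 : ℝ → ℝ)
    (hm : ∀ t, m t = M0 / (1 + ((M0 - m0) / m0) * Real.exp (-M0 * t)))
    (hm2 : ∀ t, m2 t = m t * (4 * t -
      (1 / (2 * π)) * Real.log ((m0 * Real.exp (M0 * t) + M0 - m0) / M0) + I0 / m0)) :
    ∃ T > (0 : ℝ), m2 T < 0 := by
  have hM0pos : 0 < M0 := by linarith [pi_pos]
  obtain ⟨T, hfactor, hT⟩ :=
    (((tendsto_second_moment_factor_atBot I0 hM0 hm0).eventually (eventually_lt_atBot 0)).and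
      (eventually_gt_atTop 0)).exists
  refine ⟨T, hT, ?_⟩
  rw [hm2, hm]
  exact mul_neg_of_pos_of_neg (logistic_pos hm0 hM0pos hT.le) hfactor

/-- For `M0 > 8π`, the explicit second moment
`m₂(t) = m(t)(4t - (1/2π) log((m0 e^{M0 t} + M0 - m0)/M0) + I0/m0)`
becomes negative in finite time. -/
theorem second_moment_negative_supercritical (M0 m0 I0 : ℝ)
    (hM0 : 8 * π < M0) (hm0 : 0 < m0) (hI0 : 0 ≤ I0)
    (m m2 : ℝ → ℝ)
    (hm : ∀ t, m t = M0 / (1 + ((M0 - m0) / m0) * Real.exp (-M0 * t)))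
    (hm2 : ∀ t, m2 t = m t * (4 * t -
      (1 / (2 * π)) * Real.log ((m0 * Real.exp (M0 * t) + M0 - m0) / M0) + I0 / m0)) :
    ∃ T > (0 : ℝ), m2 T < 0 :=
  second_moment_negative_supercritical_general M0 m0 I0 hM0 hm0 m m2 hm hm2
end

section
/- Let 0 < M0 < 8π < m0 and let I0 be a real number with 0 ≤ I0 < C(M0,m0), where C(M0,m0) := −((8π − M0)·m0/(2·M0·π))·log( (m0 − M0)/(8π − M0) ) + (4·m0/M0)·log( m0/(8π) ). Define h(t) := 4t − (1/(2π))·log( (m0·exp(M0·t) + M0 − m0)/M0 ) + I0/m0. Then there exists t > 0 such that h(t) < 0. -/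
/-!
The time `t⋆` with `exp (M0 t⋆) = (m0 - M0) / (8π - M0) · 8π / m0` is the critical point of `h`;
it is positive exactly because `m0 > 8π`. At `t⋆` the argument of the logarithm in `h` collapses to
`(m0 - M0) / (8π - M0)`, and a direct computation gives `m0 · h t⋆ = I0 - C(M0, m0)`, which is
negative by assumption.
-/

open Real

noncomputable section

def blowupThreshold (M0 m0 : ℝ) : ℝ :=
  -((8 * π - M0) * m0 / (2 * M0 * π)) * log ((m0 - M0) / (8 * π - M0)) +
    (4 * m0 / M0) * log (m0 / (8 * π))

def criticalTime (M0 m0 : ℝ) : ℝ :=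
  log ((m0 - M0) / (8 * π - M0) * (8 * π / m0)) / M0

end

section

variable {M0 m0 : ℝ}

lemma one_lt_criticalRatio {K : ℝ} (hM0 : 0 < M0) (hM0K : M0 < K) (hKm0 : K < m0) :
    1 < (m0 - M0) / (K - M0) * (K / m0) := by
  rw [div_mul_div_comm, one_lt_div (by nlinarith)]
  nlinarith

lemma criticalTime_pos (hM0 : 0 < M0) (hM08 : M0 < 8 * π) (hm0 : 8 * π < m0) :
    0 < criticalTime M0 m0 :=
  div_pos (log_pos (one_lt_criticalRatio hM0 hM08 hm0)) hM0

lemma exp_mul_criticalTime (hM0 : 0 < M0) (hM08 : M0 < 8 * π) (hm0 : 8 * π < m0) :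
    exp (M0 * criticalTime M0 m0) = (m0 - M0) / (8 * π - M0) * (8 * π / m0) := by
  rw [criticalTime, mul_div_cancel₀ _ hM0.ne',
    exp_log (one_pos.trans (one_lt_criticalRatio hM0 hM08 hm0))]

lemma logistic_ratio_at_criticalTime (hM0 : 0 < M0) (hM08 : M0 < 8 * π) (hm0 : 8 * π < m0) :
    (m0 * exp (M0 * criticalTime M0 m0) + M0 - m0) / M0 = (m0 - M0) / (8 * π - M0) := by
  have h8M0_ne : 8 * π - M0 ≠ 0 := by linarith
  have hm0_ne : m0 ≠ 0 := by linarith [pi_pos]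
  rw [exp_mul_criticalTime hM0 hM08 hm0]
  field_simp
  ring

lemma drift_at_criticalTime (hM0 : 0 < M0) (hM08 : M0 < 8 * π) (hm0 : 8 * π < m0) :
    4 * criticalTime M0 m0 -
        1 / (2 * π) * log ((m0 * exp (M0 * criticalTime M0 m0) + M0 - m0) / M0) =
      -blowupThreshold M0 m0 / m0 := by
  have hm0pos : 0 < m0 := by linarith [pi_pos]
  have hA : 0 < (m0 - M0) / (8 * π - M0) := div_pos (by linarith) (by linarith)
  have hlog_ratio : log ((m0 - M0) / (8 * π - M0) * (8 * π / m0)) =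
      log ((m0 - M0) / (8 * π - M0)) - log (m0 / (8 * π)) := by
    have h8 : (0 : ℝ) < 8 * π := by positivity
    rw [log_mul hA.ne' (div_pos h8 hm0pos).ne', log_div h8.ne' hm0pos.ne', log_div hm0pos.ne' h8.ne']
    ring
  rw [logistic_ratio_at_criticalTime hM0 hM08 hm0, criticalTime, hlog_ratio, blowupThreshold]
  field_simp
  ring

end

theorem normalized_second_moment_negative_general (M0 m0 I0 : ℝ)
    (hM0 : 0 < M0) (hM08 : M0 < 8 * π) (hm0 : 8 * π < m0)
    (hI0C : I0 < -((8 * π - M0) * m0 / (2 * M0 * π)) * Real.log ((m0 - M0) / (8 * π - M0)) +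
      (4 * m0 / M0) * Real.log (m0 / (8 * π)))
    (h : ℝ → ℝ)
    (hh : ∀ t, h t = 4 * t -
      (1 / (2 * π)) * Real.log ((m0 * Real.exp (M0 * t) + M0 - m0) / M0) + I0 / m0) :
    ∃ t > (0 : ℝ), h t < 0 := by
  refine ⟨criticalTime M0 m0, criticalTime_pos hM0 hM08 hm0, ?_⟩
  have hm0pos : 0 < m0 := by linarith [pi_pos]
  have hI0C_div : I0 / m0 < blowupThreshold M0 m0 / m0 := div_lt_div_of_pos_right hI0C hm0pos
  rw [hh, drift_at_criticalTime hM0 hM08 hm0, neg_div]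
  linarith

/-- For `M0 < 8π < m0` and initial second moment `I0 < C(M0, m0)`, the normalized
second moment `h` becomes negative in finite time. -/
theorem normalized_second_moment_negative (M0 m0 I0 : ℝ)
    (hM0 : 0 < M0) (hM08 : M0 < 8 * π) (hm0 : 8 * π < m0)
    (hI0 : 0 ≤ I0)
    (hI0C : I0 < -((8 * π - M0) * m0 / (2 * M0 * π)) * Real.log ((m0 - M0) / (8 * π - M0)) +
      (4 * m0 / M0) * Real.log (m0 / (8 * π)))
    (h : ℝ → ℝ)
    (hh : ∀ t, h t = 4 * t -
      (1 / (2 * π)) * Real.log ((m0 * Real.exp (M0 * t) + M0 - m0) / M0) + I0 / m0) :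
    ∃ t > (0 : ℝ), h t < 0 :=
  normalized_second_moment_negative_general M0 m0 I0 hM0 hM08 hm0 hI0C h hh
end

section
/- Let M0 > 0, λ0 > 0 and 0 < μ < 1 satisfy μ·8π/M0 > 1. Set A := 8π·μ/M0, κ := (M0/(μ·π))·(1 − μ)·(A − 1), λ(t) := λ0 + κ·t, R(t) := sqrt( λ(t)/(A − 1) ), and N(t,r) := 8π·μ·r²/(M0·(r² + λ(t))). Then for every t ≥ 0, every r with 0 < r ≤ R(t), and every real m with 0 < m ≤ M0, one has ∂_t N(t,r) − r·∂_r( (∂_r N(t,r))/r ) − (m/(2π·r))·(∂_r N(t,r))·N(t,r) ≥ 0; that is, N is a supersolution of the radial cumulated-mass equation whenever the time-dependent mass m(t) stays below M0. -/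
open Real Filter Topology

/-!
Write `N(t,r) = A r² / (r² + λ(t))` and `D = r² + λ(t)`. A direct computation gives
`∂_t N - r ∂_r(∂_r N / r) - (m / (2π r)) ∂_r N · N = (A r² / D³) (8λ - κ D - m A λ / π)`.
Since `m A / π = 8 μ m / M0 ≤ 8μ`, the bracket is at least `8(1-μ)λ - κ D`, and with
`κ = 8(1-μ)(A-1)/A` this is nonnegative exactly when `(A-1) r² ≤ λ`, i.e. when `r ≤ R(t)`.
-/

section RadialProfile

variable (a : ℝ)

theorem hasDerivAt_profile_time {ℓ : ℝ → ℝ} {ℓ' t : ℝ} (r : ℝ) (hℓ : HasDerivAt ℓ ℓ' t)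
    (hD : r ^ 2 + ℓ t ≠ 0) :
    HasDerivAt (fun s => a * r ^ 2 / (r ^ 2 + ℓ s)) (-(a * r ^ 2 * ℓ') / (r ^ 2 + ℓ t) ^ 2) t :=
  ((hasDerivAt_const t (a * r ^ 2)).fun_div (hℓ.const_add (r ^ 2)) hD).congr_deriv (by ring)

theorem hasDerivAt_profile_radial {ℓ : ℝ} (hℓ : 0 < ℓ) (σ : ℝ) :
    HasDerivAt (fun ρ => a * ρ ^ 2 / (ρ ^ 2 + ℓ)) (2 * a * ℓ * σ / (σ ^ 2 + ℓ) ^ 2) σ := by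
  have hD : σ ^ 2 + ℓ ≠ 0 := by positivity
  refine (((hasDerivAt_pow 2 σ).const_mul a).fun_div
    ((hasDerivAt_pow 2 σ).add_const ℓ) hD).congr_deriv ?_
  norm_num
  ring

theorem deriv_profile_radial {ℓ : ℝ} (hℓ : 0 < ℓ) :
    deriv (fun ρ => a * ρ ^ 2 / (ρ ^ 2 + ℓ)) = fun σ => 2 * a * ℓ * σ / (σ ^ 2 + ℓ) ^ 2 :=
  funext fun σ => (hasDerivAt_profile_radial a hℓ σ).deriv

theorem hasDerivAt_deriv_profile_radial_div_self {ℓ : ℝ} (hℓ : 0 < ℓ) {r : ℝ} (hr : r ≠ 0) :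
    HasDerivAt (fun σ => deriv (fun ρ => a * ρ ^ 2 / (ρ ^ 2 + ℓ)) σ / σ)
      (-(8 * a * ℓ * r) / (r ^ 2 + ℓ) ^ 3) r := by
  have hD : r ^ 2 + ℓ ≠ 0 := by positivity
  have hquot : (fun σ => 2 * a * ℓ / (σ ^ 2 + ℓ) ^ 2) =ᶠ[𝓝 r]
      fun σ => deriv (fun ρ => a * ρ ^ 2 / (ρ ^ 2 + ℓ)) σ / σ := by
    filter_upwards [isOpen_ne.mem_nhds hr] with σ hσ
    rw [deriv_profile_radial a hℓ]
    field_simp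
  refine HasDerivAt.congr_of_eventuallyEq ?_ hquot.symm
  refine ((hasDerivAt_const r (2 * a * ℓ)).fun_div
    (((hasDerivAt_pow 2 r).add_const ℓ).pow 2) (pow_ne_zero 2 hD)).congr_deriv ?_
  field_simp
  norm_num
  ring

theorem radial_residual_profile_eq (ℓ κ m : ℝ) {r : ℝ} (hr : r ≠ 0) (hD : r ^ 2 + ℓ ≠ 0) :
    -(a * r ^ 2 * κ) / (r ^ 2 + ℓ) ^ 2 - r * (-(8 * a * ℓ * r) / (r ^ 2 + ℓ) ^ 3)
        - m / (2 * π * r) * (2 * a * ℓ * r / (r ^ 2 + ℓ) ^ 2) * (a * r ^ 2 / (r ^ 2 + ℓ))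
      = a * r ^ 2 / (r ^ 2 + ℓ) ^ 3 * (8 * ℓ - κ * (r ^ 2 + ℓ) - m * a / π * ℓ) := by
  field_simp
  ring

end RadialProfile

theorem mul_sq_add_le_of_sub_one_mul_sq_le {a μ ℓ r : ℝ} (ha : 1 < a) (hμ : μ ≤ 1)
    (hr : (a - 1) * r ^ 2 ≤ ℓ) :
    8 * (1 - μ) * (a - 1) / a * (r ^ 2 + ℓ) ≤ 8 * (1 - μ) * ℓ := by
  have hc : 0 ≤ 8 * (1 - μ) / a := div_nonneg (by linarith) (by linarith)
  calc 8 * (1 - μ) * (a - 1) / a * (r ^ 2 + ℓ)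
      = 8 * (1 - μ) / a * ((a - 1) * r ^ 2 + (a - 1) * ℓ) := by ring
    _ ≤ 8 * (1 - μ) / a * (ℓ + (a - 1) * ℓ) := by gcongr
    _ = 8 * (1 - μ) * ℓ := by field_simp; ring

theorem mul_div_div_pi_le {m M μ : ℝ} (hM : 0 < M) (hμ : 0 ≤ μ) (hm : m ≤ M) :
    m * (8 * π * μ / M) / π ≤ 8 * μ := by
  rw [show m * (8 * π * μ / M) / π = 8 * μ * (m / M) by field_simp]
  exact mul_le_of_le_one_right (by linarith) ((div_le_one hM).mpr hm)

/-- The function `N(t,r) = 8πμ r²/(M0 (r² + λ(t)))` with `λ(t) = λ0 + κ t`,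
`κ = (M0/(μπ))(1-μ)(A-1)`, `A = 8πμ/M0 > 1`, is a supersolution of the radial
cumulated-mass equation on `0 < r ≤ R(t)` whenever the time-dependent mass
coefficient `m` satisfies `0 < m ≤ M0`. -/
theorem supersolution_radial_cumulated_mass (M0 lam0 mu : ℝ)
    (hM0 : 0 < M0) (hlam0 : 0 < lam0) (hmu0 : 0 < mu) (hmu1 : mu < 1)
    (hthr : 1 < mu * 8 * π / M0)
    (A κ : ℝ) (hA : A = 8 * π * mu / M0)
    (hκ : κ = M0 / (mu * π) * (1 - mu) * (A - 1))
    (lam R : ℝ → ℝ)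
    (hlam : ∀ t, lam t = lam0 + κ * t)
    (hR : ∀ t, R t = Real.sqrt (lam t / (A - 1)))
    (N : ℝ → ℝ → ℝ)
    (hN : ∀ t r, N t r = 8 * π * mu * r ^ 2 / (M0 * (r ^ 2 + lam t))) :
    ∀ t ≥ (0 : ℝ), ∀ r : ℝ, 0 < r → r ≤ R t → ∀ m : ℝ, 0 < m → m ≤ M0 →
      0 ≤ deriv (fun s => N s r) t
        - r * deriv (fun σ => deriv (fun ρ => N t ρ) σ / σ) r
        - m / (2 * π * r) * deriv (fun ρ => N t ρ) r * N t r := by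
  intro t ht r hr hrR m _ hmM0
  have hA1 : 1 < A := by rw [hA]; linarith [hthr, show mu * 8 * π / M0 = 8 * π * mu / M0 by ring]
  have hκA : κ = 8 * (1 - mu) * (A - 1) / A := by rw [hκ, hA]; field_simp
  have hlam_pos : 0 < lam t := by
    rw [hlam]
    have : 0 ≤ κ := by rw [hκA]; exact div_nonneg (by nlinarith) (by linarith)
    positivity
  have hNA : N = fun s ρ => A * ρ ^ 2 / (ρ ^ 2 + lam s) := by
    ext s ρ; rw [hN, hA, ← div_div, div_mul_eq_mul_div]
  have hlam_deriv : HasDerivAt lam κ t := by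
    rw [funext hlam]; simpa using ((hasDerivAt_id t).const_mul κ).const_add lam0
  have hradius : (A - 1) * r ^ 2 ≤ lam t := by
    rw [hR, le_sqrt' hr, le_div_iff₀ (by linarith)] at hrR; linarith
  have hmass : m * A / π * lam t ≤ 8 * mu * lam t :=
    mul_le_mul_of_nonneg_right (hA ▸ mul_div_div_pi_le hM0 hmu0.le hmM0) hlam_pos.le
  subst hNA
  rw [(hasDerivAt_profile_time A r hlam_deriv (by positivity)).deriv,
    (hasDerivAt_deriv_profile_radial_div_self A hlam_pos hr.ne').deriv,
    (hasDerivAt_profile_radial A hlam_pos r).deriv,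
    radial_residual_profile_eq A (lam t) κ m hr.ne' (by positivity)]
  have hflux := mul_sq_add_le_of_sub_one_mul_sq_le hA1 hmu1.le hradius
  rw [← hκA] at hflux
  exact mul_nonneg (by positivity) (by linarith)
end

section
/- Let M0 > 0, λ0 > 0 and μ₁ > 1, and define N₁(r) := 8π·μ₁·r²/(M0·(r² + λ0)) for r > 0. Then for every r > 0 and every real m with m ≥ M0, one has −r·(d/dr)( N₁'(r)/r ) − (m/(2π·r))·N₁'(r)·N₁(r) ≤ 0; that is, the time-independent function N₁ is a subsolution of the radial cumulated-mass equation whenever the time-dependent mass m(t) stays above M0. -/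
open Real

/-!
For `N(r) = c r² / (r² + λ)` one computes `N'(r)/r = 2cλ / (r² + λ)²`, and the residual of the
stationary radial cumulated-mass equation factors as `cλ r² / (r² + λ)³ · (8 - m c / π)`.
With `c = 8π μ₁ / M0` the last factor is `8 (1 - m μ₁ / M0)`, which is nonpositive as soon as
`m μ₁ ≥ M0`, in particular when `m ≥ M0` and `μ₁ > 1`.
-/

noncomputable def cumulatedMassResidual (m : ℝ) (N : ℝ → ℝ) (r : ℝ) : ℝ :=
  -(r * deriv (fun σ => deriv N σ / σ) r) - m / (2 * π * r) * deriv N r * N r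

lemma hasDerivAt_mul_sq_div_sq_add (c lam x : ℝ) (hx : x ^ 2 + lam ≠ 0) :
    HasDerivAt (fun r => c * r ^ 2 / (r ^ 2 + lam)) (2 * c * lam * x / (x ^ 2 + lam) ^ 2) x := by
  refine (((hasDerivAt_pow 2 x).const_mul c).fun_div ((hasDerivAt_pow 2 x).add_const lam)
    hx).congr_deriv ?_
  norm_num
  field_simp
  ring

lemma hasDerivAt_div_sq_add_sq (c lam x : ℝ) (hx : x ^ 2 + lam ≠ 0) :
    HasDerivAt (fun r => c / (r ^ 2 + lam) ^ 2) (-(4 * c * x) / (x ^ 2 + lam) ^ 3) x := by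
  refine ((hasDerivAt_const x c).fun_div (((hasDerivAt_pow 2 x).add_const lam).fun_pow 2)
    (pow_ne_zero 2 hx)).congr_deriv ?_
  norm_num
  field_simp
  ring

lemma deriv_deriv_mul_sq_div_sq_add_div_id {c lam r : ℝ} (hlam : 0 < lam) (hr : 0 < r) :
    deriv (fun σ => deriv (fun r => c * r ^ 2 / (r ^ 2 + lam)) σ / σ) r
      = -(8 * c * lam * r) / (r ^ 2 + lam) ^ 3 := by
  have hquot : (fun σ => deriv (fun r => c * r ^ 2 / (r ^ 2 + lam)) σ / σ)
      =ᶠ[nhds r] fun σ => 2 * c * lam / (σ ^ 2 + lam) ^ 2 := by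
    filter_upwards [eventually_gt_nhds hr] with σ hσ
    rw [(hasDerivAt_mul_sq_div_sq_add c lam σ (by positivity)).deriv]
    field_simp
  rw [hquot.deriv_eq, (hasDerivAt_div_sq_add_sq _ lam r (by positivity)).deriv]
  ring

lemma cumulatedMassResidual_mul_sq_div_sq_add {c lam r : ℝ} (m : ℝ) (hlam : 0 < lam)
    (hr : 0 < r) :
    cumulatedMassResidual m (fun r => c * r ^ 2 / (r ^ 2 + lam)) r
      = c * lam * r ^ 2 / (r ^ 2 + lam) ^ 3 * (8 - m * c / π) := by
  rw [cumulatedMassResidual, deriv_deriv_mul_sq_div_sq_add_div_id hlam hr,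
    (hasDerivAt_mul_sq_div_sq_add c lam r (by positivity)).deriv]
  field_simp

/-- The time-independent function `N₁(r) = 8πμ₁ r²/(M0 (r² + λ0))` with `μ₁ > 1`
is a subsolution of the radial cumulated-mass equation whenever the time-dependent
mass coefficient `m` satisfies `m ≥ M0`. -/
theorem subsolution_radial_cumulated_mass (M0 lam0 mu1 : ℝ)
    (hM0 : 0 < M0) (hlam0 : 0 < lam0) (hmu1 : 1 < mu1)
    (N1 : ℝ → ℝ)
    (hN1 : ∀ r, N1 r = 8 * π * mu1 * r ^ 2 / (M0 * (r ^ 2 + lam0))) :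
    ∀ r > (0 : ℝ), ∀ m : ℝ, M0 ≤ m →
      -(r * deriv (fun σ => deriv N1 σ / σ) r) - m / (2 * π * r) * deriv N1 r * N1 r ≤ 0 := by
  intro r hr m hm
  have hprofile : N1 = fun r => 8 * π * mu1 / M0 * r ^ 2 / (r ^ 2 + lam0) :=
    funext fun r => by rw [hN1]; field_simp
  subst hprofile
  rw [← cumulatedMassResidual, cumulatedMassResidual_mul_sq_div_sq_add m hlam0 hr]
  refine mul_nonpos_of_nonneg_of_nonpos (by positivity) ?_
  have hmass : 1 ≤ m * mu1 / M0 := by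
    rw [one_le_div hM0]
    exact hm.trans (le_mul_of_one_le_right (hM0.le.trans hm) hmu1.le)
  have hfactor : m * (8 * π * mu1 / M0) / π = 8 * (m * mu1 / M0) := by
    field_simp
  linarith
end

section
/- (Lower semicontinuity of the entropy.) Let (u_n) be a sequence of nonnegative Lebesgue-integrable functions on ℝ² and u a nonnegative Lebesgue-integrable function on ℝ² such that: (a) sup_n ∫_{ℝ²} |x|²·u_n(x) dx < ∞ and ∫_{ℝ²} |x|²·u(x) dx < ∞; (b) sup_n ∫_{ℝ²} u_n(x)·|log u_n(x)| dx < ∞; (c) for every bounded measurable g : ℝ² → ℝ, ∫_{ℝ²} g·u_n dx → ∫_{ℝ²} g·u dx as n → ∞. Then u·|log u| is Lebesgue-integrable on ℝ² and ∫_{ℝ²} u·log u dx ≤ liminf_{n→∞} ∫_{ℝ²} u_n·log u_n dx. -/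
/-!
`t log t` is the supremum of its tangent lines `(1 + log c) t - c`. For `c` bounded away from
`0` and `∞`, testing the weak convergence against the bounded function `1 + log c` on a set `S`
of finite measure bounds `∫_S ((1 + log c) v - c)` by `liminf ∫_S u_n log u_n`. Taking for `c`
the clamp of `v` to `[e^{-k}, e^k]` and letting `k → ∞` (the tangents increase to `v log v`;
monotone convergence) gives lower semicontinuity on `S`, together with integrability of
`v log v` there.

To pass to the whole plane, use `-t log t ≤ r t + e^{-r}` with `r = |x|`: since `e^{-|x|}` is
integrable and `∫ |x| u_n ≤ M / R` on `{|x| ≥ R}`, the entropy of `u_n` outside the ball of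
radius `R` is bounded below by a quantity tending to `0` as `R → ∞`, uniformly in `n`. The same
bound makes the negative part of `v log v` integrable; together with the uniform upper bound on
`∫ v log v` over balls, this makes `v log v` integrable.
-/

open Real MeasureTheory Filter Topology Set
open scoped ENNReal

noncomputable def mulLogTangent (c t : ℝ) : ℝ := (1 + log c) * t - c

theorem mulLogTangent_self (c : ℝ) : mulLogTangent c c = c * log c := by
  unfold mulLogTangent; ring

theorem mulLogTangent_le_mul_log {c t : ℝ} (hc : 0 < c) (ht : 0 ≤ t) :
    mulLogTangent c t ≤ t * log t := by
  rcases ht.eq_or_lt with rfl | ht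
  · simp [mulLogTangent, hc.le]
  have key : t * log (c / t) ≤ c - t :=
    calc t * log (c / t) ≤ t * (c / t - 1) := by gcongr; exact log_le_sub_one_of_pos (by positivity)
      _ = c - t := by field_simp
  rw [log_div hc.ne' ht.ne'] at key
  unfold mulLogTangent
  linarith

theorem mulLogTangent_le_of_mem_uIcc {a b t : ℝ} (ha : 0 < a) (hb : 0 < b) (hbt : b ∈ uIcc a t) :
    mulLogTangent a t ≤ mulLogTangent b t := by
  unfold mulLogTangent
  rcases le_total a t with hat | hta
  · obtain ⟨hab, hbt⟩ : a ≤ b ∧ b ≤ t := by simpa [uIcc_of_le hat] using hbt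
    have key : b - a ≤ t * log (b / a) :=
      calc b - a = b * (1 - (b / a)⁻¹) := by field_simp
        _ ≤ b * log (b / a) := by gcongr; exact one_sub_inv_le_log_of_pos (by positivity)
        _ ≤ t * log (b / a) := by gcongr; exact log_nonneg ((one_le_div ha).2 hab)
    rw [log_div hb.ne' ha.ne'] at key
    linarith
  · obtain ⟨htb, hba⟩ : t ≤ b ∧ b ≤ a := by simpa [uIcc_of_ge hta] using hbt
    have key : t * log (a / b) ≤ a - b :=
      calc t * log (a / b) ≤ b * log (a / b) := by
            gcongr; exact log_nonneg ((one_le_div hb).2 hba)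
        _ ≤ b * (a / b - 1) := by gcongr; exact log_le_sub_one_of_pos (by positivity)
        _ = a - b := by field_simp
    rw [log_div ha.ne' hb.ne'] at key
    linarith

-- Clamping `t` rather than `log t` sidesteps `log 0 = 0`: at `t = 0` the tangent point is
-- `exp (-k)`, whose tangent at `0` is `-exp (-k) → 0`.
noncomputable def clampExp (k : ℕ) (t : ℝ) : ℝ := max (exp (-k)) (min t (exp k))

theorem clampExp_pos (k : ℕ) (t : ℝ) : 0 < clampExp k t :=
  lt_max_of_lt_left (exp_pos _)

theorem abs_log_clampExp_le (k : ℕ) (t : ℝ) : |log (clampExp k t)| ≤ k := by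
  have h : exp (-k) ≤ exp k := exp_le_exp.2 (by linarith [k.cast_nonneg (α := ℝ)])
  rw [abs_le, le_log_iff_exp_le (clampExp_pos k t), log_le_iff_le_exp (clampExp_pos k t)]
  exact ⟨le_max_left _ _, max_le h (min_le_right _ _)⟩

theorem continuous_clampExp (k : ℕ) : Continuous (clampExp k) := by
  unfold clampExp; fun_prop

theorem clampExp_mem_uIcc {k k' : ℕ} (hk : k ≤ k') (t : ℝ) :
    clampExp k' t ∈ uIcc (clampExp k t) t := by
  have h1 : exp (-k' : ℝ) ≤ exp (-k) := exp_le_exp.2 (by simp [hk])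
  have h2 : exp (-k : ℝ) ≤ exp k := exp_le_exp.2 (by linarith [k.cast_nonneg (α := ℝ)])
  have h3 : exp (k : ℝ) ≤ exp k' := exp_le_exp.2 (by simp [hk])
  simp only [mem_uIcc, clampExp]
  grind

theorem monotone_mulLogTangent_clampExp (t : ℝ) :
    Monotone fun k => mulLogTangent (clampExp k t) t := fun _ _ hk =>
  mulLogTangent_le_of_mem_uIcc (clampExp_pos _ _) (clampExp_pos _ _) (clampExp_mem_uIcc hk t)

theorem tendsto_mulLogTangent_clampExp {t : ℝ} (ht : 0 ≤ t) :
    Tendsto (fun k => mulLogTangent (clampExp k t) t) atTop (𝓝 (t * log t)) := by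
  rcases ht.eq_or_lt with rfl | ht
  · have h : ∀ k : ℕ, mulLogTangent (clampExp k 0) 0 = -exp (-k) := fun k => by
      simp [mulLogTangent, clampExp, (exp_pos _).le]
    simpa [h] using (tendsto_exp_neg_atTop_nhds_zero.comp tendsto_natCast_atTop_atTop).neg
  obtain ⟨K, hK⟩ := exists_nat_ge |log t|
  refine tendsto_atTop_of_eventually_const (i₀ := K) fun k hk => ?_
  have hkt : |log t| ≤ k := hK.trans (Nat.cast_le.2 hk)
  rw [abs_le, le_log_iff_exp_le ht, log_le_iff_le_exp ht] at hkt
  rw [clampExp, min_eq_left hkt.2, max_eq_right hkt.1, mulLogTangent_self]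

theorem neg_mul_log_le (r : ℝ) {t : ℝ} (ht : 0 ≤ t) : -(t * log t) ≤ r * t + exp (-r) := by
  have := mulLogTangent_le_mul_log (exp_pos (-r)) ht
  rw [mulLogTangent, log_exp] at this
  linarith

section Integrability

variable {α : Type*} [MeasurableSpace α] {μ : Measure α}

theorem integrable_mul_abs_log_iff {f : α → ℝ} (hf : AEStronglyMeasurable f μ)
    (hf0 : ∀ x, 0 ≤ f x) :
    Integrable (fun x => f x * |log (f x)|) μ ↔ Integrable (fun x => f x * log (f x)) μ := by
  rw [← integrable_norm_iff (f := fun x => f x * log (f x))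
    (hf.aemeasurable.mul hf.aemeasurable.log).aestronglyMeasurable]
  simp_rw [Real.norm_eq_abs, abs_mul, abs_of_nonneg (hf0 _)]

theorem integrable_mul_of_integrable_sq_mul {φ f : α → ℝ} (hφ : AEStronglyMeasurable φ μ)
    (hf0 : ∀ x, 0 ≤ f x) (hf : Integrable f μ) (hφf : Integrable (fun x => φ x ^ 2 * f x) μ) :
    Integrable (fun x => φ x * f x) μ :=
  (hf.add hφf).mono' (hφ.mul hf.1) <| ae_of_all _ fun x => by
    rw [Real.norm_eq_abs, abs_mul, abs_of_nonneg (hf0 x)]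
    have : |φ x| ≤ 1 + φ x ^ 2 := by nlinarith [sq_abs (φ x), sq_nonneg (|φ x| - 1)]
    simpa [add_mul] using mul_le_mul_of_nonneg_right this (hf0 x)

theorem integrable_of_monotone_of_integral_le {f : ℕ → α → ℝ} {F : α → ℝ}
    (hf : ∀ n, Integrable (f n) μ) (h_mono : ∀ᵐ x ∂μ, Monotone fun n => f n x)
    (h_tendsto : ∀ᵐ x ∂μ, Tendsto (fun n => f n x) atTop (𝓝 (F x))) {b : ℝ}
    (hb : ∀ᶠ n in atTop, ∫ x, f n x ∂μ ≤ b) : Integrable F μ := by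
  suffices Integrable (fun x => F x - f 0 x) μ from
    (this.add (hf 0)).congr (ae_of_all _ fun x => sub_add_cancel _ _)
  have h_nonneg : ∀ᵐ x ∂μ, 0 ≤ F x - f 0 x := by
    filter_upwards [h_mono, h_tendsto] with x hx_mono hx_tendsto
    exact sub_nonneg.2 (ge_of_tendsto' hx_tendsto fun n => hx_mono (Nat.zero_le n))
  refine ⟨(aestronglyMeasurable_of_tendsto_ae atTop (fun n => (hf n).1) h_tendsto).sub (hf 0).1,
    (hasFiniteIntegral_iff_ofReal h_nonneg).2 ?_⟩
  have h_lim := lintegral_tendsto_of_tendsto_of_monotone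
    (f := fun n x => ENNReal.ofReal (f n x - f 0 x)) (F := fun x => ENNReal.ofReal (F x - f 0 x))
    (fun n => ((hf n).sub (hf 0)).aemeasurable.ennreal_ofReal)
    (by filter_upwards [h_mono] with x hx n m hnm using
      ENNReal.ofReal_le_ofReal (by linarith [hx hnm]))
    (by filter_upwards [h_tendsto] with x hx using
      ENNReal.tendsto_ofReal (hx.sub tendsto_const_nhds))
  refine (le_of_tendsto h_lim (hb.mono fun n hn => ?_)).trans_lt
    (ENNReal.ofReal_lt_top (r := b - ∫ x, f 0 x ∂μ))
  rw [← ofReal_integral_eq_lintegral_ofReal (f := fun x => f n x - f 0 x) ((hf n).sub (hf 0)),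
    integral_sub (hf n) (hf 0)]
  · exact ENNReal.ofReal_le_ofReal (by linarith)
  · filter_upwards [h_mono] with x hx using sub_nonneg.2 (hx (Nat.zero_le n))

theorem integrable_of_setIntegral_le {h N : α → ℝ} {S : ℕ → Set α}
    (hS : ∀ m, MeasurableSet (S m)) (hS_mono : Monotone S) (hS_univ : ⋃ m, S m = univ)
    (hN : Integrable N μ) (hhN : ∀ x, -N x ≤ h x) (hh : ∀ m, IntegrableOn h (S m) μ) {B : ℝ}
    (hB : ∀ᶠ m in atTop, ∫ x in S m, h x ∂μ ≤ B) : Integrable h μ := by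
  suffices Integrable (fun x => h x + N x) μ from
    (this.sub hN).congr (ae_of_all _ fun x => add_sub_cancel_right _ _)
  have h_nonneg : ∀ x, 0 ≤ h x + N x := fun x => by linarith [hhN x]
  refine integrable_of_monotone_of_integral_le (f := fun m => (S m).indicator fun x => h x + N x)
    (fun m => (integrable_indicator_iff (hS m)).2 ((hh m).add hN.integrableOn))
    (ae_of_all _ fun x m m' hmm' =>
      indicator_le_indicator_of_subset (hS_mono hmm') (fun x => h_nonneg x) x)
    (ae_of_all _ fun x => ?_) (b := B + ∫ x, |N x| ∂μ) (hB.mono fun m hm => ?_)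
  · obtain ⟨m, hm⟩ := mem_iUnion.1 (hS_univ ▸ mem_univ x)
    exact tendsto_atTop_of_eventually_const (i₀ := m) fun m' hm' =>
      indicator_of_mem (hS_mono hm' hm) _
  · rw [integral_indicator (hS m), integral_add (hh m) hN.integrableOn]
    have : ∫ x in S m, N x ∂μ ≤ ∫ x, |N x| ∂μ :=
      (setIntegral_mono hN.integrableOn hN.abs.integrableOn fun x => le_abs_self _).trans
        (setIntegral_le_integral hN.abs (ae_of_all _ fun x => abs_nonneg _))
    linarith

end Integrability

section WeakConvergence

variable {α : Type*} [MeasurableSpace α] {μ : Measure α}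

def TendstoWeakly (μ : Measure α) (u : ℕ → α → ℝ) (v : α → ℝ) : Prop :=
  ∀ g : α → ℝ, Measurable g → (∃ C : ℝ, ∀ x, |g x| ≤ C) →
    Tendsto (fun n => ∫ x, g x * u n x ∂μ) atTop (𝓝 (∫ x, g x * v x ∂μ))

variable {u : ℕ → α → ℝ} {v : α → ℝ}

theorem TendstoWeakly.tendsto_integral_mul (h : TendstoWeakly μ u v) {g : α → ℝ}
    (hg : AEStronglyMeasurable g μ) {C : ℝ} (hgC : ∀ x, |g x| ≤ C) :
    Tendsto (fun n => ∫ x, g x * u n x ∂μ) atTop (𝓝 (∫ x, g x * v x ∂μ)) := by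
  set g' : α → ℝ := fun x => max (-C) (min (hg.mk g x) C)
  have hgg' : g =ᵐ[μ] g' := hg.ae_eq_mk.mono fun x hx => by
    obtain ⟨h₁, h₂⟩ := abs_le.1 (hgC x)
    simp only [g', ← hx, min_eq_left h₂, max_eq_right h₁]
  have hg'C : ∀ x, |g' x| ≤ C := fun x =>
    abs_le.2 ⟨le_max_left _ _, max_le (by linarith [abs_nonneg (g x), hgC x]) (min_le_right _ _)⟩
  have h_congr : ∀ f : α → ℝ, ∫ x, g x * f x ∂μ = ∫ x, g' x * f x ∂μ := fun f =>
    integral_congr_ae (by filter_upwards [hgg'] with x hx; rw [hx])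
  simpa only [h_congr] using
    h g' (measurable_const.max (hg.stronglyMeasurable_mk.measurable.min measurable_const)) ⟨C, hg'C⟩

variable {c : α → ℝ} {K : ℝ}

theorem integrable_one_add_log_mul {f : α → ℝ} (hf : Integrable f μ) (hc : AEStronglyMeasurable c μ)
    (hK : ∀ x, |log (c x)| ≤ K) : Integrable (fun x => (1 + log (c x)) * f x) μ :=
  hf.bdd_mul (c := 1 + K) (hc.aemeasurable.log.const_add 1).aestronglyMeasurable <|
    ae_of_all _ fun x => by
      rw [Real.norm_eq_abs]
      exact (abs_add_le _ _).trans (by simpa using hK x)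

theorem integrableOn_of_abs_log_le (hc : AEStronglyMeasurable c μ) (hc_pos : ∀ x, 0 < c x)
    (hK : ∀ x, |log (c x)| ≤ K) {S : Set α} (hS : μ S ≠ ∞) : IntegrableOn c S μ :=
  Measure.integrableOn_of_bounded hS hc (M := exp K) (ae_of_all _ fun x => by
    rw [Real.norm_eq_abs, abs_of_pos (hc_pos x), ← log_le_iff_le_exp (hc_pos x)]
    exact (le_abs_self _).trans (hK x))

theorem integrableOn_mulLogTangent {f : α → ℝ} (hf : Integrable f μ)
    (hc : AEStronglyMeasurable c μ) (hc_pos : ∀ x, 0 < c x) (hK : ∀ x, |log (c x)| ≤ K)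
    {S : Set α} (hS : μ S ≠ ∞) : IntegrableOn (fun x => mulLogTangent (c x) (f x)) S μ :=
  (integrable_one_add_log_mul hf hc hK).integrableOn.sub
    (integrableOn_of_abs_log_le hc hc_pos hK hS)

theorem TendstoWeakly.tendsto_setIntegral_mulLogTangent (h : TendstoWeakly μ u v)
    (hu : ∀ n, Integrable (u n) μ) (hv : Integrable v μ) (hc : AEStronglyMeasurable c μ)
    (hc_pos : ∀ x, 0 < c x) (hK : ∀ x, |log (c x)| ≤ K) {S : Set α} (hS : MeasurableSet S)
    (hSμ : μ S ≠ ∞) :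
    Tendsto (fun n => ∫ x in S, mulLogTangent (c x) (u n x) ∂μ) atTop
      (𝓝 (∫ x in S, mulLogTangent (c x) (v x) ∂μ)) := by
  have h_eq : ∀ f : α → ℝ, Integrable f μ → ∫ x in S, mulLogTangent (c x) (f x) ∂μ =
      ∫ x, S.indicator (fun x => 1 + log (c x)) x * f x ∂μ - ∫ x in S, c x ∂μ := fun f hf => by
    simp_rw [← indicator_mul_left, integral_indicator hS]
    exact integral_sub (integrable_one_add_log_mul hf hc hK).integrableOn
      (integrableOn_of_abs_log_le hc hc_pos hK hSμ)
  simp_rw [h_eq _ (hu _), h_eq v hv]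
  refine (h.tendsto_integral_mul
    ((hc.aemeasurable.log.const_add 1).aestronglyMeasurable.indicator hS)
    (C := 1 + K) fun x => ?_).sub_const _
  by_cases hx : x ∈ S
  · rw [indicator_of_mem hx]; exact (abs_add_le _ _).trans (by simpa using hK x)
  · rw [indicator_of_notMem hx, abs_zero]; linarith [abs_nonneg (log (c x)), hK x]

theorem TendstoWeakly.setIntegral_mulLogTangent_le (h : TendstoWeakly μ u v)
    (hu_nonneg : ∀ n x, 0 ≤ u n x) (hu : ∀ n, Integrable (u n) μ) (hv : Integrable v μ)
    (hu_ent : ∀ n, Integrable (fun x => u n x * log (u n x)) μ)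
    (hc : AEStronglyMeasurable c μ) (hc_pos : ∀ x, 0 < c x) (hK : ∀ x, |log (c x)| ≤ K)
    {S : Set α} (hS : MeasurableSet S) (hSμ : μ S ≠ ∞) {b : ℝ}
    (hb : ∃ᶠ n in atTop, ∫ x in S, u n x * log (u n x) ∂μ ≤ b) :
    ∫ x in S, mulLogTangent (c x) (v x) ∂μ ≤ b :=
  le_of_tendsto_of_frequently (h.tendsto_setIntegral_mulLogTangent hu hv hc hc_pos hK hS hSμ) <|
    hb.mono fun n hn => (setIntegral_mono (integrableOn_mulLogTangent (hu n) hc hc_pos hK hSμ)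
      (hu_ent n).integrableOn fun x => mulLogTangent_le_mul_log (hc_pos x) (hu_nonneg n x)).trans hn

theorem TendstoWeakly.integrableOn_mul_log_and_setIntegral_le (h : TendstoWeakly μ u v)
    (hu_nonneg : ∀ n x, 0 ≤ u n x) (hv_nonneg : ∀ x, 0 ≤ v x)
    (hu : ∀ n, Integrable (u n) μ) (hv : Integrable v μ)
    (hu_ent : ∀ n, Integrable (fun x => u n x * log (u n x)) μ)
    {S : Set α} (hS : MeasurableSet S) (hSμ : μ S ≠ ∞) {b : ℝ}
    (hb : ∃ᶠ n in atTop, ∫ x in S, u n x * log (u n x) ∂μ ≤ b) :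
    IntegrableOn (fun x => v x * log (v x)) S μ ∧ ∫ x in S, v x * log (v x) ∂μ ≤ b := by
  have hc (k : ℕ) : AEStronglyMeasurable (fun x => clampExp k (v x)) μ :=
    (continuous_clampExp k).comp_aestronglyMeasurable hv.1
  have h_int (k : ℕ) : IntegrableOn (fun x => mulLogTangent (clampExp k (v x)) (v x)) S μ :=
    integrableOn_mulLogTangent hv (hc k) (fun _ => clampExp_pos k _)
      (fun _ => abs_log_clampExp_le k _) hSμ
  have h_le (k : ℕ) : ∫ x in S, mulLogTangent (clampExp k (v x)) (v x) ∂μ ≤ b :=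
    h.setIntegral_mulLogTangent_le hu_nonneg hu hv hu_ent (hc k) (fun _ => clampExp_pos k _)
      (fun _ => abs_log_clampExp_le k _) hS hSμ hb
  have h_mono := ae_of_all (μ.restrict S) fun x => monotone_mulLogTangent_clampExp (v x)
  have h_tendsto := ae_of_all (μ.restrict S) fun x => tendsto_mulLogTangent_clampExp (hv_nonneg x)
  have h_int_lim : IntegrableOn (fun x => v x * log (v x)) S μ :=
    integrable_of_monotone_of_integral_le h_int h_mono h_tendsto (Eventually.of_forall h_le)
  exact ⟨h_int_lim, le_of_tendsto'
    (integral_tendsto_of_tendsto_of_monotone h_int h_int_lim h_mono h_tendsto) h_le⟩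

end WeakConvergence

section Confining

variable {α : Type*} [MeasurableSpace α] {μ : Measure α} {φ : α → ℝ}

theorem measure_setOf_lt_ne_top (hexp : Integrable (fun x => exp (-φ x)) μ) (R : ℝ) :
    μ {x | φ x < R} ≠ ∞ :=
  ((measure_mono fun x (hx : φ x < R) => show exp (-R) ≤ exp (-φ x) from
    exp_le_exp.2 (by linarith)).trans_lt (hexp.measure_ge_lt_top (exp_pos (-R)))).ne

theorem setIntegral_mul_log_le {f : α → ℝ} (hφ : Measurable φ)
    (hexp : Integrable (fun x => exp (-φ x)) μ) (hf0 : ∀ x, 0 ≤ f x)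
    (hf_ent : Integrable (fun x => f x * log (f x)) μ)
    (hf_m2 : Integrable (fun x => φ x ^ 2 * f x) μ) {R : ℝ} (hR : 0 < R) :
    ∫ x in {x | φ x < R}, f x * log (f x) ∂μ ≤ ∫ x, f x * log (f x) ∂μ +
      (∫ x, φ x ^ 2 * f x ∂μ) / R + ∫ x in {x | R ≤ φ x}, exp (-φ x) ∂μ := by
  have hT : MeasurableSet {x | R ≤ φ x} := measurableSet_le measurable_const hφ
  have h_split := integral_add_compl (s := {x | φ x < R}) (measurableSet_lt hφ measurable_const)
    hf_ent
  rw [show {x | φ x < R}ᶜ = {x | R ≤ φ x} by ext; simp] at h_split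
  have h_tail : ∫ x in {x | R ≤ φ x}, -(f x * log (f x)) ∂μ ≤
      ∫ x in {x | R ≤ φ x}, (φ x ^ 2 * f x / R + exp (-φ x)) ∂μ := by
    refine setIntegral_mono_on hf_ent.neg.integrableOn ((hf_m2.div_const R).add hexp).integrableOn
      hT fun x (hx : R ≤ φ x) => ?_
    have : φ x * f x ≤ φ x ^ 2 * f x / R := by
      rw [le_div_iff₀ hR]
      nlinarith [mul_nonneg (mul_nonneg (hR.le.trans hx) (hf0 x)) (sub_nonneg.2 hx)]
    linarith [neg_mul_log_le (φ x) (hf0 x)]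
  rw [integral_add (hf_m2.div_const R).integrableOn hexp.integrableOn, integral_div,
    integral_neg] at h_tail
  have h_m2 : ∫ x in {x | R ≤ φ x}, φ x ^ 2 * f x ∂μ ≤ ∫ x, φ x ^ 2 * f x ∂μ :=
    setIntegral_le_integral hf_m2 (ae_of_all _ fun x => mul_nonneg (sq_nonneg _) (hf0 x))
  linarith [div_le_div_of_nonneg_right h_m2 hR.le]

theorem tendsto_setIntegral_setOf_natCast_add_one_le {f : α → ℝ} (hφ : Measurable φ)
    (hf : Integrable f μ) :
    Tendsto (fun m : ℕ => ∫ x in {x | (m : ℝ) + 1 ≤ φ x}, f x ∂μ) atTop (𝓝 0) := by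
  have h_anti : Antitone fun m : ℕ => {x | (m : ℝ) + 1 ≤ φ x} := fun m m' hm x hx =>
    show (m : ℝ) + 1 ≤ φ x from le_trans (by gcongr) hx
  have h_empty : ⋂ m : ℕ, {x | (m : ℝ) + 1 ≤ φ x} = ∅ :=
    eq_empty_of_forall_notMem fun x hx => (exists_nat_gt (φ x)).elim fun m hm => by
      have hmx : (m : ℝ) + 1 ≤ φ x := mem_iInter.1 hx m
      linarith
  simpa [h_empty] using tendsto_setIntegral_of_antitone
    (fun m => measurableSet_le measurable_const hφ) h_anti ⟨0, hf.integrableOn⟩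

variable {u : ℕ → α → ℝ} {v : α → ℝ}

theorem TendstoWeakly.integrable_mul_log_and_integral_le_liminf (h : TendstoWeakly μ u v)
    (hu_nonneg : ∀ n x, 0 ≤ u n x) (hv_nonneg : ∀ x, 0 ≤ v x)
    (hu : ∀ n, Integrable (u n) μ) (hv : Integrable v μ)
    (hφ : Measurable φ) (hexp : Integrable (fun x => exp (-φ x)) μ)
    (hu_m2 : ∀ n, Integrable (fun x => φ x ^ 2 * u n x) μ) {M : ℝ}
    (hM : ∀ n, ∫ x, φ x ^ 2 * u n x ∂μ ≤ M) (hv_m1 : Integrable (fun x => φ x * v x) μ)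
    (hu_ent : ∀ n, Integrable (fun x => u n x * log (u n x)) μ) {C : ℝ}
    (hC : ∀ n, ∫ x, u n x * log (u n x) ∂μ ≤ C) :
    Integrable (fun x => v x * log (v x)) μ ∧
      ∫ x, v x * log (v x) ∂μ ≤ liminf (fun n => ∫ x, u n x * log (u n x) ∂μ) atTop := by
  set L := liminf (fun n => ∫ x, u n x * log (u n x) ∂μ) atTop
  set S : ℕ → Set α := fun m => {x | φ x < m + 1}
  have hS (m : ℕ) : MeasurableSet (S m) := measurableSet_lt hφ measurable_const
  have hS_mono : Monotone S := fun m m' hm x (hx : φ x < m + 1) => show φ x < m' + 1 by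
    have : (m : ℝ) ≤ m' := Nat.cast_le.2 hm
    linarith
  have hS_univ : ⋃ m, S m = univ := eq_univ_of_forall fun x => mem_iUnion.2 <|
    (exists_nat_gt (φ x)).imp fun m hm => show φ x < m + 1 by linarith
  -- `τ m` bounds, uniformly in `n`, the entropy that `u n` loses when restricted to `S m`.
  set τ : ℕ → ℝ := fun m => M / (m + 1) + ∫ x in {x | (m : ℝ) + 1 ≤ φ x}, exp (-φ x) ∂μ
  have hτ : Tendsto τ atTop (𝓝 0) := by
    simpa [τ, div_eq_mul_inv] using (tendsto_one_div_add_atTop_nhds_zero_nat.const_mul M).add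
      (tendsto_setIntegral_setOf_natCast_add_one_le hφ hexp)
  have h_local (b : ℝ) (hb : L < b) (m : ℕ) :
      IntegrableOn (fun x => v x * log (v x)) (S m) μ ∧
        ∫ x in S m, v x * log (v x) ∂μ ≤ b + τ m := by
    refine h.integrableOn_mul_log_and_setIntegral_le hu_nonneg hv_nonneg hu hv hu_ent (hS m)
      (measure_setOf_lt_ne_top hexp _) <|
      (frequently_lt_of_liminf_lt (isCoboundedUnder_ge_of_le atTop hC) hb).mono fun n hn => ?_
    have := setIntegral_mul_log_le hφ hexp (hu_nonneg n) (hu_ent n) (hu_m2 n)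
      (by positivity : (0 : ℝ) < m + 1)
    have := div_le_div_of_nonneg_right (hM n) (by positivity : (0 : ℝ) ≤ m + 1)
    linarith
  obtain ⟨b, hb⟩ := exists_gt L
  have h_int : Integrable (fun x => v x * log (v x)) μ :=
    integrable_of_setIntegral_le hS hS_mono hS_univ (hv_m1.add hexp)
      (fun x => show -(φ x * v x + exp (-φ x)) ≤ _ by linarith [neg_mul_log_le (φ x) (hv_nonneg x)])
      (fun m => (h_local b hb m).1) (B := b + 1)
      ((hτ.eventually (gt_mem_nhds one_pos)).mono fun m hm => by linarith [(h_local b hb m).2])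
  refine ⟨h_int, le_of_forall_gt_imp_ge_of_dense fun b hb => ?_⟩
  have h_lim := tendsto_setIntegral_of_monotone hS hS_mono h_int.integrableOn
  rw [hS_univ, setIntegral_univ] at h_lim
  simpa using
    le_of_tendsto_of_tendsto' h_lim (tendsto_const_nhds.add hτ) fun m => (h_local b hb m).2

end Confining

theorem integrable_exp_neg_norm {E : Type*} [NormedAddCommGroup E] [NormedSpace ℝ E]
    [FiniteDimensional ℝ E] [MeasurableSpace E] [BorelSpace E] (μ : Measure E)
    [μ.IsAddHaarMeasure] : Integrable (fun x => exp (-‖x‖)) μ := by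
  set d := Module.finrank ℝ E
  refine ((integrable_one_add_norm (μ := μ) (r := d + 1) (by linarith)).const_mul
    (exp 1 * (d + 1).factorial)).mono' (by fun_prop) (ae_of_all _ fun x => ?_)
  have hx : (0 : ℝ) < 1 + ‖x‖ := by positivity
  have h := inv_anti₀ (by positivity) (pow_div_factorial_le_exp _ hx.le (d + 1))
  rw [inv_div, div_eq_mul_inv] at h
  rw [Real.norm_eq_abs, abs_of_pos (exp_pos _), show -‖x‖ = 1 + -(1 + ‖x‖) by ring, exp_add,
    exp_neg, rpow_neg hx.le, ← Nat.cast_add_one, rpow_natCast, mul_assoc]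
  gcongr

/-- Lower semicontinuity of the entropy along a weakly-`L¹` convergent sequence
with uniformly bounded second moments and entropies. -/
theorem entropy_lower_semicontinuous
    (u : ℕ → EuclideanSpace ℝ (Fin 2) → ℝ) (v : EuclideanSpace ℝ (Fin 2) → ℝ)
    (hu_nonneg : ∀ n x, 0 ≤ u n x) (hv_nonneg : ∀ x, 0 ≤ v x)
    (hu_int : ∀ n, Integrable (u n)) (hv_int : Integrable v)
    (hu_m2 : ∀ n, Integrable (fun x => ‖x‖ ^ 2 * u n x))
    (hm2_bdd : ∃ C : ℝ, ∀ n, ∫ x, ‖x‖ ^ 2 * u n x ≤ C)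
    (hv_m2 : Integrable (fun x => ‖x‖ ^ 2 * v x))
    (hu_ent : ∀ n, Integrable (fun x => u n x * |Real.log (u n x)|))
    (hent_bdd : ∃ C : ℝ, ∀ n, ∫ x, u n x * |Real.log (u n x)| ≤ C)
    (hweak : ∀ g : EuclideanSpace ℝ (Fin 2) → ℝ, Measurable g → (∃ C : ℝ, ∀ x, |g x| ≤ C) →
      Filter.Tendsto (fun n => ∫ x, g x * u n x) Filter.atTop (nhds (∫ x, g x * v x))) :
    Integrable (fun x => v x * |Real.log (v x)|) ∧
      ∫ x, v x * Real.log (v x) ≤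
        Filter.liminf (fun n => ∫ x, u n x * Real.log (u n x)) Filter.atTop := by
  obtain ⟨M, hM⟩ := hm2_bdd
  obtain ⟨C, hC⟩ := hent_bdd
  have hu_log (n : ℕ) : Integrable (fun x => u n x * log (u n x)) :=
    (integrable_mul_abs_log_iff (hu_int n).1 (hu_nonneg n)).1 (hu_ent n)
  have hv_m1 : Integrable (fun x => ‖x‖ * v x) :=
    integrable_mul_of_integrable_sq_mul continuous_norm.aestronglyMeasurable hv_nonneg hv_int hv_m2
  have h_ent_le (n : ℕ) : ∫ x, u n x * log (u n x) ≤ C :=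
    (integral_mono (hu_log n) (hu_ent n) fun x =>
      mul_le_mul_of_nonneg_left (le_abs_self _) (hu_nonneg n x)).trans (hC n)
  obtain ⟨h_int, h_le⟩ := TendstoWeakly.integrable_mul_log_and_integral_le_liminf hweak hu_nonneg
    hv_nonneg hu_int hv_int measurable_norm (integrable_exp_neg_norm volume) hu_m2 hM hv_m1 hu_log
    h_ent_le
  exact ⟨(integrable_mul_abs_log_iff hv_int.1 hv_nonneg).2 h_int, h_le⟩
end
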